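/- A ring R is GNC if and only if J(R) is nil and R/J(R) is GNC. -/

import Mathlib

/-- An element is nil-clean if it is the sum of an idempotent and a nilpotent. -/
def IsNilClean {R : Type*} [Ring R] (a : R) : Prop :=
  ∃ e q : R, IsIdempotentElem e ∧ IsNilpotent q ∧ a = e + q

/-- A ring is GNC (generalized nil-clean) if every non-unit is nil-clean. -/
def IsGNC (R : Type*) [Ring R] : Prop :=
  ∀ a : R, ¬ IsUnit a → IsNilClean a

/-!
Along a surjection `f : R → S` with nil kernel, units lift (if `f (a * b) = 1`, then `a * b` is
`1` plus a nilpotent), nilpotents lift, and idempotents lift by the classical lifting theorem, so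
`S` GNC implies `R` GNC; the other implication holds for every surjection. For `R → R/J(R)` this
leaves the nilness of `J(R)`: if `x = e + q ∈ J(R)`, then `e` is idempotent and nilpotent modulo
`J(R)`, hence lies in `J(R)`, and an idempotent of `J(R)` vanishes because `1 - e` has a left
inverse.
-/
section

variable {R S : Type*} [Ring R] [Ring S]

theorem IsNilClean.map {F : Type*} [FunLike F R S] [RingHomClass F R S] (f : F) {a : R}
    (ha : IsNilClean a) : IsNilClean (f a) := by
  obtain ⟨e, q, he, hq, rfl⟩ := ha
  exact ⟨f e, f q, he.map f, hq.map f, map_add f e q⟩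

theorem IsGNC.of_surjective (f : R →+* S) (hf : Function.Surjective f) (hR : IsGNC R) :
    IsGNC S := by
  intro b hb
  obtain ⟨a, rfl⟩ := hf b
  exact (hR a fun ha ↦ hb (ha.map f)).map f

section NilKernel

variable (f : R →+* S) (hker : ∀ x ∈ RingHom.ker f, IsNilpotent x)
include hker

theorem RingHom.isNilpotent_of_isNilpotent_map {a : R} (ha : IsNilpotent (f a)) :
    IsNilpotent a := by
  obtain ⟨n, hn⟩ := ha
  obtain ⟨m, hm⟩ := hker (a ^ n) (by rw [RingHom.mem_ker, map_pow, hn])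
  exact ⟨n * m, by rw [pow_mul, hm]⟩

theorem RingHom.isUnit_of_isUnit_map (hf : Function.Surjective f) {a : R}
    (ha : IsUnit (f a)) : IsUnit a := by
  obtain ⟨b, hb⟩ := hf ↑ha.unit⁻¹
  have isUnit_of_map_eq_one {c : R} (hc : f c = 1) : IsUnit c := by
    have hnil := hker (c - 1) (by rw [RingHom.mem_ker, map_sub, hc, map_one, sub_self])
    simpa using hnil.isUnit_one_add
  have hab := isUnit_of_map_eq_one (c := a * b) (by rw [map_mul, hb, ha.mul_val_inv])
  have hba := isUnit_of_map_eq_one (c := b * a) (by rw [map_mul, hb, ha.val_inv_mul])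
  refine isUnit_iff_exists_and_exists.2
    ⟨⟨b * ↑hab.unit⁻¹, by rw [← mul_assoc, hab.mul_val_inv]⟩,
      ⟨↑hba.unit⁻¹ * b, by rw [mul_assoc, hba.val_inv_mul]⟩⟩

theorem IsGNC.of_surjective_of_ker_isNilpotent (hf : Function.Surjective f) (hS : IsGNC S) :
    IsGNC R := by
  intro a ha
  obtain ⟨E, Q, hE, hQ, hEQ⟩ := hS (f a) fun hfa ↦ ha (f.isUnit_of_isUnit_map hker hf hfa)
  obtain ⟨e, he, rfl⟩ := exists_isIdempotentElem_eq_of_ker_isNilpotent f hker E (hf E) hE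
  refine ⟨e, a - e, he, f.isNilpotent_of_isNilpotent_map hker ?_, (add_sub_cancel e a).symm⟩
  rwa [map_sub, hEQ, add_sub_cancel_left]

end NilKernel

theorem TwoSidedIdeal.mem_jacobson_bot {x : R} :
    x ∈ (⊥ : TwoSidedIdeal R).jacobson ↔ x ∈ (⊥ : Ideal R).jacobson := by
  rw [← TwoSidedIdeal.mem_asIdeal, TwoSidedIdeal.asIdeal_jacobson]
  simp

theorem TwoSidedIdeal.mem_ker_ringCon_mk' {I : TwoSidedIdeal R} {x : R} :
    x ∈ RingHom.ker I.ringCon.mk' ↔ x ∈ I := by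
  rw [RingHom.mem_ker, ← TwoSidedIdeal.mem_ker, TwoSidedIdeal.ker_ringCon_mk']

theorem IsIdempotentElem.eq_zero_of_mem_jacobson_bot {e : R} (he : IsIdempotentElem e)
    (hJ : e ∈ (⊥ : Ideal R).jacobson) : e = 0 := by
  obtain ⟨z, hz⟩ := Ideal.mem_jacobson_iff.1 hJ (-1)
  have hz : z * (1 - e) = 1 := by
    rw [Ideal.mem_bot] at hz
    rw [← sub_eq_zero, ← hz]
    noncomm_ring
  calc e = z * (1 - e) * e := by rw [hz, one_mul]
    _ = 0 := by rw [mul_assoc, sub_mul, one_mul, he.eq, sub_self, mul_zero]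

theorem IsIdempotentElem.mem_of_add_mem (I : TwoSidedIdeal R) {e q : R}
    (he : IsIdempotentElem e) (hq : IsNilpotent q) (h : e + q ∈ I) : e ∈ I := by
  rw [← TwoSidedIdeal.mem_ker_ringCon_mk', RingHom.mem_ker] at h ⊢
  rw [map_add, add_eq_zero_iff_eq_neg] at h
  exact (he.map _).eq_zero_of_isNilpotent (h ▸ (hq.map _).neg)

theorem IsGNC.isNilpotent_of_mem_jacobson (hR : IsGNC R) {x : R}
    (hx : x ∈ (⊥ : Ideal R).jacobson) : IsNilpotent x := by
  by_cases hu : IsUnit x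
  · have h1 : (1 : R) ∈ (⊥ : Ideal R).jacobson := by
      simpa [hu.val_inv_mul] using Ideal.mul_mem_left _ ↑hu.unit⁻¹ hx
    rw [← mul_one x, IsIdempotentElem.one.eq_zero_of_mem_jacobson_bot h1, mul_zero]
    exact IsNilpotent.zero
  · obtain ⟨e, q, he, hq, rfl⟩ := hR x hu
    have he0 : e = 0 := he.eq_zero_of_mem_jacobson_bot <| TwoSidedIdeal.mem_jacobson_bot.1 <|
      he.mem_of_add_mem _ hq (TwoSidedIdeal.mem_jacobson_bot.2 hx)
    rwa [he0, zero_add]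

end

theorem gnc_iff_jacobson_nil_and_quotient_gnc {R : Type*} [Ring R] :
    IsGNC R ↔
      ((∀ x ∈ ((⊥ : Ideal R).jacobson), IsNilpotent x) ∧
        IsGNC ((⊥ : TwoSidedIdeal R).jacobson.ringCon.Quotient)) := by
  set J := (⊥ : TwoSidedIdeal R).jacobson
  have hsurj : Function.Surjective J.ringCon.mk' := J.ringCon.mk'_surjective
  constructor
  · intro hR
    exact ⟨fun x hx ↦ hR.isNilpotent_of_mem_jacobson hx, hR.of_surjective _ hsurj⟩
  · rintro ⟨hnil, hQ⟩
    refine hQ.of_surjective_of_ker_isNilpotent _ (fun x hx ↦ hnil x ?_) hsurj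
    exact TwoSidedIdeal.mem_jacobson_bot.1 (TwoSidedIdeal.mem_ker_ringCon_mk'.1 hx)
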